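/- If each L_j : R^d → R is twice continuously differentiable with Hessians uniformly bounded by L (i.e., −L·I ⪯ ∇²L_j ⪯ L·I) and gradients bounded by B, and q ∈ Δ^K is fixed, then the function r(Φ) = −∑_j q_j log γ_j(Φ) (with γ the softmax of −L_j(φ_j)) has Hessian bounded in operator norm by L + B², hence r is (L+B²)-smooth. -/

import Mathlib

/-!
Along a line `t ↦ Φ + t • V`, `r` becomes `Σ_j q_j ℓ_j(t) + log Σ_j exp (-ℓ_j(t))` with
`ℓ_j(t) = L_j(φ_j + t v_j)`. Differentiating twice, using `γ_j' = γ_j (a - ℓ_j')` with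
`a = Σ_i γ_i ℓ_i'`, gives `Σ_j (q_j - γ_j) ℓ_j'' + (Σ_j γ_j ℓ_j'^2 - a^2)`: the block-diagonal part
and a variance under `γ`. As `|q_j - γ_j| ≤ 1` the first term is at most `Lc ‖V‖²`, and the
variance lies between `0` and `Σ_j ℓ_j'^2 ≤ B² ‖V‖²`. The derivative of `∇r` is a symmetric
operator whose quadratic form is this second derivative, so its norm is at most `Lc + B²`, and the
mean value inequality makes `∇r` `(Lc + B²)`-Lipschitz.
-/

open scoped RealInnerProductSpace

theorem DifferentiableAt.hasDerivAt_comp_add_smul {E F : Type*} [NormedAddCommGroup E]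
    [NormedSpace ℝ E] [NormedAddCommGroup F] [NormedSpace ℝ F] {g : E → F} {x v : E} {t : ℝ}
    (hg : DifferentiableAt ℝ g (x + t • v)) :
    HasDerivAt (fun s : ℝ => g (x + s • v)) (fderiv ℝ g (x + t • v) v) t :=
  hg.hasFDerivAt.comp_hasDerivAt t (by simpa using ((hasDerivAt_id t).smul_const v).const_add x)

section
variable {E : Type*} [NormedAddCommGroup E] [InnerProductSpace ℝ E]

theorem ContinuousLinearMap.norm_le_of_abs_inner_self_le {T : E →L[ℝ] E}
    (hT : (T : E →ₗ[ℝ] E).IsSymmetric) {C : ℝ} (hC : 0 ≤ C)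
    (h : ∀ v, |⟪v, T v⟫| ≤ C * ‖v‖ ^ 2) : ‖T‖ ≤ C := by
  rw [T.norm_eq_iSup_rayleighQuotient hT]
  refine ciSup_le fun v => ?_
  rcases eq_or_ne v 0 with rfl | hv
  · simpa using hC
  rw [ContinuousLinearMap.rayleighQuotient, ContinuousLinearMap.reApplyInnerSelf_apply,
    abs_div, abs_sq, div_le_iff₀ (by positivity), RCLike.re_to_real, real_inner_comm]
  exact h v

variable [CompleteSpace E]

theorem ContDiff.gradient {f : E → ℝ} {m n : WithTop ℕ∞} (hf : ContDiff ℝ n f) (hmn : m + 1 ≤ n) :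
    ContDiff ℝ m (gradient f) :=
  (InnerProductSpace.toDual ℝ E).symm.contDiff.comp (hf.fderiv_right hmn)

theorem inner_fderiv_gradient_apply {f : E → ℝ} {x : E} (hf : DifferentiableAt ℝ (fderiv ℝ f) x)
    (v w : E) : ⟪fderiv ℝ (gradient f) x v, w⟫ = fderiv ℝ (fderiv ℝ f) x v w := by
  let e : StrongDual ℝ E ≃L[ℝ] E := (InnerProductSpace.toDual ℝ E).symm.toContinuousLinearEquiv
  have : fderiv ℝ (gradient f) x = (e : StrongDual ℝ E →L[ℝ] E) ∘L fderiv ℝ (fderiv ℝ f) x :=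
    (e.hasFDerivAt.comp x hf.hasFDerivAt).fderiv
  rw [this]
  exact InnerProductSpace.toDual_symm_apply

theorem isSymmetric_fderiv_gradient {f : E → ℝ} (hf : ContDiff ℝ 2 f) (x : E) :
    (fderiv ℝ (gradient f) x : E →ₗ[ℝ] E).IsSymmetric := by
  have hd : DifferentiableAt ℝ (fderiv ℝ f) x :=
    (hf.fderiv_right (m := 1) le_rfl).differentiable one_ne_zero x
  intro v w
  simp only [ContinuousLinearMap.coe_coe]
  rw [inner_fderiv_gradient_apply hd, real_inner_comm, inner_fderiv_gradient_apply hd]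
  exact hf.contDiffAt.isSymmSndFDerivAt (by simp) v w

theorem lipschitzWith_gradient_of_abs_inner_fderiv_gradient_le {f : E → ℝ} (hf : ContDiff ℝ 2 f)
    {C : ℝ} (hC : 0 ≤ C) (h : ∀ x v, |⟪v, fderiv ℝ (gradient f) x v⟫| ≤ C * ‖v‖ ^ 2) :
    LipschitzWith C.toNNReal (gradient f) := by
  refine lipschitzWith_of_nnnorm_fderiv_le ((hf.gradient (m := 1) le_rfl).differentiable
    one_ne_zero) fun x => ?_
  rw [← norm_toNNReal]
  exact Real.toNNReal_le_toNNReal <|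
    (fderiv ℝ (gradient f) x).norm_le_of_abs_inner_self_le (isSymmetric_fderiv_gradient hf x) hC
      (h x)

theorem hasDerivAt_comp_line {f : E → ℝ} {x v : E} {t : ℝ}
    (hf : DifferentiableAt ℝ f (x + t • v)) :
    HasDerivAt (fun s : ℝ => f (x + s • v)) ⟪gradient f (x + t • v), v⟫ t := by
  simpa only [inner_gradient_left] using hf.hasDerivAt_comp_add_smul

theorem hasDerivAt_inner_gradient_line {f : E → ℝ} {x v : E}
    (hf : DifferentiableAt ℝ (gradient f) x) :
    HasDerivAt (fun s : ℝ => ⟪gradient f (x + s • v), v⟫) ⟪v, fderiv ℝ (gradient f) x v⟫ 0 := by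
  have h := (show DifferentiableAt ℝ (gradient f) (x + (0 : ℝ) • v) by simpa using hf)
    |>.hasDerivAt_comp_add_smul
  rw [zero_smul, add_zero] at h
  exact (h.inner ℝ (hasDerivAt_const 0 v)).congr_deriv
    (by rw [inner_zero_right, zero_add, real_inner_comm])

theorem inner_fderiv_gradient_eq_of_hasDerivAt_line {f : E → ℝ} {x v : E} {g : ℝ → ℝ} {c : ℝ}
    (hf : Differentiable ℝ f) (hgrad : DifferentiableAt ℝ (gradient f) x)
    (h₁ : ∀ t, HasDerivAt (fun t => f (x + t • v)) (g t) t) (h₂ : HasDerivAt g c 0) :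
    ⟪v, fderiv ℝ (gradient f) x v⟫ = c := by
  have hg : g = fun t => ⟪gradient f (x + t • v), v⟫ :=
    funext fun t => (h₁ t).unique (hasDerivAt_comp_line (hf _))
  subst hg
  exact (hasDerivAt_inner_gradient_line hgrad).unique h₂

end

noncomputable def softmax {ι : Type*} [Fintype ι] (x : ι → ℝ) (j : ι) : ℝ :=
  Real.exp (x j) / ∑ i, Real.exp (x i)

section Softmax
variable {ι : Type*} [Fintype ι]

theorem sum_softmax_mul_eq (x y : ι → ℝ) :
    ∑ j, softmax x j * y j = (∑ j, Real.exp (x j) * y j) / ∑ i, Real.exp (x i) := by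
  rw [Finset.sum_div]
  exact Finset.sum_congr rfl fun j _ => div_mul_eq_mul_div _ _ _

theorem sq_sum_mul_le_sum_mul_sq {γ : ι → ℝ} (hγ : γ ∈ stdSimplex ℝ ι) (a : ι → ℝ) :
    (∑ j, γ j * a j) ^ 2 ≤ ∑ j, γ j * a j ^ 2 := by
  have := Finset.sum_sq_le_sum_mul_sum_of_sq_le_mul Finset.univ (r := fun j => γ j * a j)
    (fun j _ => hγ.1 j) (fun j _ => mul_nonneg (hγ.1 j) (sq_nonneg (a j)))
    (fun j _ => (by ring : (γ j * a j) ^ 2 = γ j * (γ j * a j ^ 2)).le)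
  rwa [hγ.2, one_mul] at this

theorem abs_sum_sub_mul_add_variance_le {q γ : ι → ℝ} (hq : q ∈ stdSimplex ℝ ι)
    (hγ : γ ∈ stdSimplex ℝ ι) (a b : ι → ℝ) :
    |∑ j, (q j - γ j) * b j + (∑ j, γ j * a j ^ 2 - (∑ j, γ j * a j) ^ 2)| ≤
      ∑ j, |b j| + ∑ j, a j ^ 2 := by
  have hvar := sq_sum_mul_le_sum_mul_sq hγ a
  have hb : |∑ j, (q j - γ j) * b j| ≤ ∑ j, |b j| := by
    refine (Finset.abs_sum_le_sum_abs _ _).trans (Finset.sum_le_sum fun j _ => ?_)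
    have hqj := mem_Icc_of_mem_stdSimplex hq j
    have hγj := mem_Icc_of_mem_stdSimplex hγ j
    rw [abs_mul]
    exact mul_le_of_le_one_left (abs_nonneg _) (abs_le.2 ⟨by linarith [hqj.1, hγj.2],
      by linarith [hqj.2, hγj.1]⟩)
  have ha : ∑ j, γ j * a j ^ 2 ≤ ∑ j, a j ^ 2 := Finset.sum_le_sum fun j _ =>
    mul_le_of_le_one_left (sq_nonneg _) (mem_Icc_of_mem_stdSimplex hγ j).2
  calc _ ≤ |∑ j, (q j - γ j) * b j| + |∑ j, γ j * a j ^ 2 - (∑ j, γ j * a j) ^ 2| := abs_add_le _ _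
    _ ≤ ∑ j, |b j| + ∑ j, a j ^ 2 := by
      rw [abs_of_nonneg (sub_nonneg.2 hvar)]
      linarith [sq_nonneg (∑ j, γ j * a j)]

variable [Nonempty ι]

theorem sum_exp_pos (x : ι → ℝ) : 0 < ∑ i, Real.exp (x i) :=
  Finset.sum_pos (fun i _ => Real.exp_pos (x i)) Finset.univ_nonempty

theorem softmax_mem_stdSimplex (x : ι → ℝ) : softmax x ∈ stdSimplex ℝ ι :=
  ⟨fun j => div_nonneg (Real.exp_pos _).le (sum_exp_pos x).le, by
    simp only [softmax, ← Finset.sum_div, div_self (sum_exp_pos x).ne']⟩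

theorem log_softmax (x : ι → ℝ) (j : ι) :
    Real.log (softmax x j) = x j - Real.log (∑ i, Real.exp (x i)) := by
  rw [softmax, Real.log_div (Real.exp_ne_zero _) (sum_exp_pos x).ne', Real.log_exp]

theorem neg_sum_mul_log_softmax {q : ι → ℝ} (hq : ∑ j, q j = 1) (x : ι → ℝ) :
    -∑ j, q j * Real.log (softmax x j) = -∑ j, q j * x j + Real.log (∑ i, Real.exp (x i)) := by
  simp only [log_softmax, mul_sub, Finset.sum_sub_distrib, ← Finset.sum_mul, hq]
  ring

variable {x : ι → ℝ → ℝ} {x' : ι → ℝ} {t : ℝ}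

theorem hasDerivAt_log_sum_exp (hx : ∀ j, HasDerivAt (x j) (x' j) t) :
    HasDerivAt (fun s => Real.log (∑ i, Real.exp (x i s)))
      (∑ j, softmax (x · t) j * x' j) t := by
  rw [sum_softmax_mul_eq]
  exact (HasDerivAt.fun_sum fun i _ => (hx i).exp).log (sum_exp_pos _).ne'

theorem hasDerivAt_softmax (hx : ∀ j, HasDerivAt (x j) (x' j) t) (j : ι) :
    HasDerivAt (fun s => softmax (x · s) j)
      (softmax (x · t) j * (x' j - ∑ i, softmax (x · t) i * x' i)) t := by
  have hS := sum_exp_pos (x · t)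
  refine (((hx j).exp).fun_div (HasDerivAt.fun_sum fun i _ => (hx i).exp) hS.ne').congr_deriv ?_
  rw [sum_softmax_mul_eq, softmax]
  field_simp

theorem hasDerivAt_sum_mul_add_log_sum_exp_neg (q : ι → ℝ) {ℓ : ι → ℝ → ℝ}
    (hℓ : ∀ j, HasDerivAt (ℓ j) (x' j) t) :
    HasDerivAt (fun s => ∑ j, q j * ℓ j s + Real.log (∑ j, Real.exp (-ℓ j s)))
      (∑ j, (q j - softmax (-ℓ · t) j) * x' j) t := by
  have h := (HasDerivAt.fun_sum (u := Finset.univ) fun j _ => (hℓ j).const_mul (q j)).add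
    (hasDerivAt_log_sum_exp (x := (-ℓ · ·)) fun j => (hℓ j).neg)
  refine h.congr_deriv ?_
  simp only [mul_neg, Finset.sum_neg_distrib, sub_mul, Finset.sum_sub_distrib]
  ring

theorem hasDerivAt_sum_sub_softmax_mul (q : ι → ℝ) {ℓ a : ι → ℝ → ℝ} {b : ι → ℝ}
    (hℓ : ∀ j, HasDerivAt (ℓ j) (a j t) t) (ha : ∀ j, HasDerivAt (a j) (b j) t) :
    HasDerivAt (fun s => ∑ j, (q j - softmax (-ℓ · s) j) * a j s)
      (∑ j, (q j - softmax (-ℓ · t) j) * b j +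
        (∑ j, softmax (-ℓ · t) j * a j t ^ 2 - (∑ j, softmax (-ℓ · t) j * a j t) ^ 2)) t := by
  have hγ := hasDerivAt_softmax (x := (-ℓ · ·)) fun i => (hℓ i).neg
  have h := HasDerivAt.fun_sum (u := Finset.univ) fun j _ =>
    ((hasDerivAt_const t (q j)).fun_sub (hγ j)).fun_mul (ha j)
  set γ := softmax (-ℓ · t)
  set m := ∑ j, γ j * a j t
  have hneg : ∑ i, γ i * -a i t = -m := by simp only [m, mul_neg, Finset.sum_neg_distrib]
  have hvar : ∑ j, γ j * (a j t - m) * a j t = ∑ j, γ j * a j t ^ 2 - (∑ j, γ j * a j t) * m := by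
    rw [Finset.sum_mul, ← Finset.sum_sub_distrib]
    exact Finset.sum_congr rfl fun j _ => by ring
  refine h.congr_deriv ?_
  rw [hneg, Finset.sum_add_distrib, sq, ← hvar, add_comm]
  exact congrArg _ (Finset.sum_congr rfl fun j _ => by ring)

end Softmax

noncomputable def softmaxCrossEntropy {ι E : Type*} [Fintype ι] (q : ι → ℝ) (L : ι → E → ℝ)
    (Φ : PiLp 2 (fun _ : ι => E)) : ℝ :=
  -∑ j, q j * Real.log (softmax (fun i => -L i (Φ i)) j)

section SoftmaxCrossEntropy
variable {ι E : Type*} [Fintype ι] [Nonempty ι] {q : ι → ℝ} {L : ι → E → ℝ}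

theorem softmaxCrossEntropy_eq (hq : ∑ j, q j = 1) (Φ : PiLp 2 (fun _ : ι => E)) :
    softmaxCrossEntropy q L Φ = ∑ j, q j * L j (Φ j) + Real.log (∑ j, Real.exp (-L j (Φ j))) := by
  rw [softmaxCrossEntropy, neg_sum_mul_log_softmax hq]
  simp only [mul_neg, Finset.sum_neg_distrib, neg_neg]

theorem contDiff_softmaxCrossEntropy [NormedAddCommGroup E] [NormedSpace ℝ E]
    (hq : ∑ j, q j = 1) {n : WithTop ℕ∞}
    (hL : ∀ j, ContDiff ℝ n (L j)) : ContDiff ℝ n (softmaxCrossEntropy q L) := by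
  have hLΦ : ∀ j, ContDiff ℝ n fun Φ : PiLp 2 (fun _ : ι => E) => L j (Φ j) :=
    fun j => (hL j).comp (PiLp.proj (𝕜 := ℝ) 2 (fun _ : ι => E) j).contDiff
  rw [funext (softmaxCrossEntropy_eq hq)]
  exact (ContDiff.sum fun j _ => contDiff_const.mul (hLΦ j)).add
    ((ContDiff.sum fun j _ => (hLΦ j).neg.exp).log fun Φ => (sum_exp_pos _).ne')

variable [NormedAddCommGroup E] [InnerProductSpace ℝ E] [CompleteSpace E]

theorem inner_fderiv_gradient_softmaxCrossEntropy (hq : ∑ j, q j = 1)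
    (hL : ∀ j, ContDiff ℝ 2 (L j)) (Φ V : PiLp 2 (fun _ : ι => E)) :
    ⟪V, fderiv ℝ (gradient (softmaxCrossEntropy q L)) Φ V⟫ =
      ∑ j, (q j - softmax (fun i => -L i (Φ i)) j) * ⟪V j, fderiv ℝ (gradient (L j)) (Φ j) (V j)⟫ +
        (∑ j, softmax (fun i => -L i (Φ i)) j * ⟪gradient (L j) (Φ j), V j⟫ ^ 2 -
          (∑ j, softmax (fun i => -L i (Φ i)) j * ⟪gradient (L j) (Φ j), V j⟫) ^ 2) := by
  have hr := contDiff_softmaxCrossEntropy hq hL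
  have hℓ : ∀ j t, HasDerivAt (fun s : ℝ => L j (Φ j + s • V j))
      ⟪gradient (L j) (Φ j + t • V j), V j⟫ t :=
    fun j t => hasDerivAt_comp_line ((hL j).differentiable two_ne_zero _)
  have ha : ∀ j, HasDerivAt (fun s : ℝ => ⟪gradient (L j) (Φ j + s • V j), V j⟫)
      ⟪V j, fderiv ℝ (gradient (L j)) (Φ j) (V j)⟫ 0 :=
    fun j => hasDerivAt_inner_gradient_line
      (((hL j).gradient (m := 1) le_rfl).differentiable one_ne_zero _)
  refine inner_fderiv_gradient_eq_of_hasDerivAt_line (hr.differentiable two_ne_zero)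
    ((hr.gradient (m := 1) le_rfl).differentiable one_ne_zero Φ) (fun t => ?_)
    (by simpa only [zero_smul, add_zero] using hasDerivAt_sum_sub_softmax_mul q (hℓ · 0) ha)
  simp only [softmaxCrossEntropy_eq hq]
  exact hasDerivAt_sum_mul_add_log_sum_exp_neg q (hℓ · t)

end SoftmaxCrossEntropy

theorem kl_softmax_smooth_general (K d : ℕ)
    (L : Fin K → EuclideanSpace ℝ (Fin d) → ℝ)
    (hC2 : ∀ j, ContDiff ℝ 2 (L j))
    (Lc B : ℝ) (hLc : 0 ≤ Lc)
    (hHess : ∀ j (φ v : EuclideanSpace ℝ (Fin d)),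
      |⟪v, fderiv ℝ (fun ψ => gradient (L j) ψ) φ v⟫| ≤ Lc * ‖v‖ ^ 2)
    (hApprox : ∀ j (φ : EuclideanSpace ℝ (Fin d)), ‖gradient (L j) φ‖ ≤ B)
    (q : Fin K → ℝ) (hq0 : ∀ j, 0 ≤ q j) (hq1 : ∑ j, q j = 1)
    (γ : PiLp 2 (fun _ : Fin K => EuclideanSpace ℝ (Fin d)) → Fin K → ℝ)
    (hγ : ∀ Φ j, γ Φ j = Real.exp (-(L j (Φ j))) / ∑ j', Real.exp (-(L j' (Φ j'))))
    (r : PiLp 2 (fun _ : Fin K => EuclideanSpace ℝ (Fin d)) → ℝ)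
    (hr : ∀ Φ, r Φ = -∑ j, q j * Real.log (γ Φ j)) :
    LipschitzWith ((Lc + B ^ 2).toNNReal) (fun Φ => gradient r Φ) := by
  have : Nonempty (Fin K) :=
    Fin.pos_iff_nonempty.1 (Nat.pos_of_ne_zero (by rintro rfl; simp at hq1))
  obtain rfl : r = softmaxCrossEntropy q L := funext fun Φ => by
    rw [hr, softmaxCrossEntropy, show γ Φ = softmax (fun j => -L j (Φ j)) from funext (hγ Φ)]
  refine lipschitzWith_gradient_of_abs_inner_fderiv_gradient_le
    (contDiff_softmaxCrossEntropy hq1 hC2) (by positivity) fun Φ V => ?_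
  have hHessV : ∀ j, |⟪V j, fderiv ℝ (gradient (L j)) (Φ j) (V j)⟫| ≤ Lc * ‖V j‖ ^ 2 :=
    fun j => hHess j (Φ j) (V j)
  have hgradV : ∀ j, ⟪gradient (L j) (Φ j), V j⟫ ^ 2 ≤ B ^ 2 * ‖V j‖ ^ 2 := fun j => by
    rw [← mul_pow, ← sq_abs]
    exact pow_le_pow_left₀ (abs_nonneg _) ((abs_real_inner_le_norm _ _).trans
      (mul_le_mul_of_nonneg_right (hApprox j _) (norm_nonneg _))) 2
  rw [inner_fderiv_gradient_softmaxCrossEntropy hq1 hC2]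
  calc _ ≤ ∑ j, |⟪V j, fderiv ℝ (gradient (L j)) (Φ j) (V j)⟫| +
          ∑ j, ⟪gradient (L j) (Φ j), V j⟫ ^ 2 :=
        abs_sum_sub_mul_add_variance_le ⟨hq0, hq1⟩ (softmax_mem_stdSimplex _) _ _
    _ ≤ ∑ j, Lc * ‖V j‖ ^ 2 + ∑ j, B ^ 2 * ‖V j‖ ^ 2 :=
        add_le_add (Finset.sum_le_sum fun j _ => hHessV j) (Finset.sum_le_sum fun j _ => hgradV j)
    _ = (Lc + B ^ 2) * ‖V‖ ^ 2 := by
      rw [PiLp.norm_sq_eq_of_L2, ← Finset.mul_sum, ← Finset.mul_sum, add_mul]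

/-- If each `L_j` is `C²` with Hessian quadratic form bounded by `Lc`
(`−Lc·I ⪯ ∇²L_j ⪯ Lc·I`) and gradient bounded by `B`, and `q ∈ Δ^K` is fixed, then
`r(Φ) = −∑_j q_j log γ_j(Φ)`, with `γ` the softmax of `−L_j(φ_j)`, is
`(Lc + B²)`-smooth, i.e. its gradient is `(Lc + B²)`-Lipschitz. -/
theorem kl_softmax_smooth (K d : ℕ)
    (L : Fin K → EuclideanSpace ℝ (Fin d) → ℝ)
    (hC2 : ∀ j, ContDiff ℝ 2 (L j))
    (Lc B : ℝ) (hLc : 0 ≤ Lc) (hB : 0 ≤ B)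
    (hHess : ∀ j (φ v : EuclideanSpace ℝ (Fin d)),
      |⟪v, fderiv ℝ (fun ψ => gradient (L j) ψ) φ v⟫| ≤ Lc * ‖v‖ ^ 2)
    (hApprox : ∀ j (φ : EuclideanSpace ℝ (Fin d)), ‖gradient (L j) φ‖ ≤ B)
    (q : Fin K → ℝ) (hq0 : ∀ j, 0 ≤ q j) (hq1 : ∑ j, q j = 1)
    (γ : PiLp 2 (fun _ : Fin K => EuclideanSpace ℝ (Fin d)) → Fin K → ℝ)
    (hγ : ∀ Φ j, γ Φ j = Real.exp (-(L j (Φ j))) / ∑ j', Real.exp (-(L j' (Φ j'))))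
    (r : PiLp 2 (fun _ : Fin K => EuclideanSpace ℝ (Fin d)) → ℝ)
    (hr : ∀ Φ, r Φ = -∑ j, q j * Real.log (γ Φ j)) :
    LipschitzWith ((Lc + B ^ 2).toNNReal) (fun Φ => gradient r Φ) :=
  kl_softmax_smooth_general K d L hC2 Lc B hLc hHess hApprox q hq0 hq1 γ hγ r hr
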